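/- arXiv:0705.3810 — 2 statements merged into one kernel-verified Lean document; each statement's English description precedes it below -/
import Mathlib

section
/- Let E be a Hilbert A-module and u : E → E a bijective α-morphism with α an automorphism of A. Then the map β on rank-one operators defined by β(θ_{ξ,η}) = θ_{u(ξ), u(η)} extends to a *-automorphism of K(E), the C*-algebra of compact operators on E, and β⁻¹(θ_{ξ,η}) = θ_{u⁻¹(ξ), u⁻¹(η)}. -/
section RankOneDefs

open scoped RightActions

/-- Hilbert C⋆-module in the sense of the older Mathlib `CStarModule`: a right module
(action of `Aᵐᵒᵖ`), inner product `A`-linear on the right in the second argument. -/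
class OldCStarModule (A E : Type*) [NonUnitalSemiring A] [StarRing A] [Module ℂ A]
    [AddCommGroup E] [Module ℂ E] [PartialOrder A] [SMul Aᵐᵒᵖ E] [Norm A] [Norm E]
    extends Inner A E where
  inner_add_right {x} {y} {z} : inner x (y + z) = inner x y + inner x z
  inner_self_nonneg {x} : 0 ≤ inner x x
  inner_self {x} : inner x x = 0 ↔ x = 0
  inner_op_smul_right {a : A} {x y : E} : inner x (y <• a) = inner x y * a
  inner_smul_right_complex {z : ℂ} {x} {y} : inner x (z • y) = z • inner x y
  star_inner x y : star (inner x y) = inner y x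
  norm_eq_sqrt_norm_inner_self x : ‖x‖ = √‖inner x x‖

namespace OldCStarModule

section OldLemmas

variable {A E : Type*} [NonUnitalCStarAlgebra A] [PartialOrder A]
  [NormedAddCommGroup E] [NormedSpace ℂ E] [SMul Aᵐᵒᵖ E] [OldCStarModule A E]

lemma inner_zero_right {x : E} : inner A x (0 : E) = 0 := by
  have h := inner_smul_right_complex (A := A) (z := (0 : ℂ)) (x := x) (y := (0 : E))
  simpa using h

lemma inner_neg_right {x y : E} : inner A x (-y) = -inner A x y := by
  have h := inner_smul_right_complex (A := A) (z := (-1 : ℂ)) (x := x) (y := y)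
  simpa using h

lemma inner_sub_right {x y z : E} : inner A x (y - z) = inner A x y - inner A x z := by
  rw [sub_eq_add_neg, inner_add_right, inner_neg_right, ← sub_eq_add_neg]

lemma inner_zero_left {x : E} : inner A (0 : E) x = 0 := by
  rw [← star_inner x (0 : E), inner_zero_right, star_zero]

lemma inner_sub_left {x y z : E} : inner A (x - y) z = inner A x z - inner A y z := by
  rw [← star_inner z (x - y), inner_sub_right, star_sub, star_inner, star_inner]

lemma inner_op_smul_left {a : A} {x y : E} : inner A (x <• a) y = star a * inner A x y := by
  rw [← star_inner y (x <• a), inner_op_smul_right, star_mul, star_inner]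

lemma inner_smul_right_real {r : ℝ} {x y : E} : inner A x (r • y) = r • inner A x y := by
  have h₁ : r • y = (r : ℂ) • y := by simp
  rw [h₁, inner_smul_right_complex]
  simp

lemma inner_smul_left_real {r : ℝ} {x y : E} : inner A (r • x) y = r • inner A x y := by
  rw [← star_inner y (r • x), inner_smul_right_real, star_smul, star_trivial, star_inner]

lemma norm_sq_eq {x : E} : ‖x‖ ^ 2 = ‖inner A x x‖ := by
  rw [norm_eq_sqrt_norm_inner_self (A := A) x, Real.sq_sqrt (norm_nonneg _)]

lemma inner_mul_inner_swap_le [StarOrderedRing A] {x y : E} :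
    inner A y x * inner A x y ≤ ‖x‖ ^ 2 • inner A y y := by
  rcases eq_or_ne x 0 with h | h
  · subst h
    simp [inner_zero_left, inner_zero_right]
  · have h₁ : ∀ a : A, (0 : A) ≤ ‖x‖ ^ 2 • (star a * a) - ‖x‖ ^ 2 • (inner A y x * a)
        - ‖x‖ ^ 2 • (star a * inner A x y) + ‖x‖ ^ 2 • (‖x‖ ^ 2 • inner A y y) := fun a => by
      calc (0 : A) ≤ inner A (x <• a - ‖x‖ ^ 2 • y) (x <• a - ‖x‖ ^ 2 • y) := inner_self_nonneg
        _ = star a * inner A x x * a - ‖x‖ ^ 2 • (inner A y x * a)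
              - ‖x‖ ^ 2 • (star a * inner A x y) + ‖x‖ ^ 2 • (‖x‖ ^ 2 • inner A y y) := by
            simp only [inner_sub_right, inner_op_smul_right, inner_sub_left,
              inner_op_smul_left, inner_smul_left_real, inner_smul_right_real, smul_sub,
              sub_mul, mul_sub, smul_mul_assoc, mul_smul_comm, mul_assoc]
            abel
        _ ≤ ‖x‖ ^ 2 • (star a * a) - ‖x‖ ^ 2 • (inner A y x * a)
              - ‖x‖ ^ 2 • (star a * inner A x y) + ‖x‖ ^ 2 • (‖x‖ ^ 2 • inner A y y) := by
            gcongr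
            calc star a * inner A x x * a ≤ ‖inner A x x‖ • (star a * a) :=
                  CStarAlgebra.star_left_conjugate_le_norm_smul (hb := star_inner x x)
              _ = ‖x‖ ^ 2 • (star a * a) := by rw [norm_sq_eq (A := A)]
    specialize h₁ (inner A x y)
    simp only [star_inner, sub_self, zero_sub, le_neg_add_iff_add_le, add_zero] at h₁
    rwa [smul_le_smul_iff_of_pos_left (pow_pos (norm_pos_iff.mpr h) _)] at h₁

lemma norm_inner_le [StarOrderedRing A] (E : Type*) [NormedAddCommGroup E] [NormedSpace ℂ E]
    [SMul Aᵐᵒᵖ E] [OldCStarModule A E] {x y : E} : ‖inner A x y‖ ≤ ‖x‖ * ‖y‖ := by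
  have := calc ‖inner A x y‖ ^ 2 = ‖inner A y x * inner A x y‖ := by
                rw [← star_inner x y, CStarRing.norm_star_mul_self, pow_two]
    _ ≤ ‖‖x‖ ^ 2 • inner A y y‖ := by
                refine CStarAlgebra.norm_le_norm_of_nonneg_of_le ?_ inner_mul_inner_swap_le
                rw [← star_inner x y]
                exact star_mul_self_nonneg _
    _ = ‖x‖ ^ 2 * ‖inner A y y‖ := by simp [norm_smul]
    _ = ‖x‖ ^ 2 * ‖y‖ ^ 2 := by rw [norm_sq_eq (A := A) (x := y)]
    _ = (‖x‖ * ‖y‖) ^ 2 := by ring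
  exact (pow_le_pow_iff_left₀ (norm_nonneg _) (by positivity) two_ne_zero).mp this

end OldLemmas

end OldCStarModule

private lemma inner_ext_right {A E : Type*}
    [NonUnitalCStarAlgebra A] [PartialOrder A] [StarOrderedRing A]
    [NormedAddCommGroup E] [NormedSpace ℂ E] [SMul Aᵐᵒᵖ E] [OldCStarModule A E]
    (x y : E) (h : ∀ ζ : E, (inner A ζ x : A) = inner A ζ y) : x = y := by
  have h2 : (inner A (x - y) (x - y) : A) = 0 := by
    rw [OldCStarModule.inner_sub_right, h (x - y), sub_self]
  exact sub_eq_zero.mp (OldCStarModule.inner_self.mp h2)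

private lemma norm_op_smul_le {A E : Type*}
    [NonUnitalCStarAlgebra A] [PartialOrder A] [StarOrderedRing A]
    [NormedAddCommGroup E] [NormedSpace ℂ E] [SMul Aᵐᵒᵖ E] [OldCStarModule A E]
    (x : E) (a : A) : ‖x <• a‖ ≤ ‖x‖ * ‖a‖ := by
  have h1 : (inner A (x <• a) (x <• a) : A) = star a * ((inner A x x : A) * a) := by
    rw [OldCStarModule.inner_op_smul_right (A := A), OldCStarModule.inner_op_smul_left (A := A), mul_assoc]
  have h2 : ‖x <• a‖ ^ 2 ≤ (‖x‖ * ‖a‖) ^ 2 := by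
    rw [OldCStarModule.norm_sq_eq (A := A), h1]
    calc ‖star a * ((inner A x x : A) * a)‖ ≤ ‖star a‖ * ‖(inner A x x : A) * a‖ := norm_mul_le _ _
      _ ≤ ‖star a‖ * (‖(inner A x x : A)‖ * ‖a‖) := by gcongr; exact norm_mul_le _ _
      _ = ‖a‖ * (‖x‖ ^ 2 * ‖a‖) := by rw [norm_star, ← OldCStarModule.norm_sq_eq (A := A)]
      _ = (‖x‖ * ‖a‖) ^ 2 := by ring
  exact (pow_le_pow_iff_left₀ (norm_nonneg _) (by positivity) two_ne_zero).mp h2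

/-- The "rank-one" operator `θ_{ξ,η} : ζ ↦ ξ ⟪η, ζ⟫` on a Hilbert C⋆-module. -/
noncomputable def rankOne (A : Type*) {E : Type*}
    [NonUnitalCStarAlgebra A] [PartialOrder A] [StarOrderedRing A]
    [NormedAddCommGroup E] [NormedSpace ℂ E] [SMul Aᵐᵒᵖ E] [OldCStarModule A E]
    (ξ η : E) : E →L[ℂ] E :=
  LinearMap.mkContinuous
    { toFun := fun ζ => ξ <• (inner A η ζ : A)
      map_add' := fun x y => by
        show ξ <• (inner A η (x + y) : A) = ξ <• (inner A η x : A) + ξ <• (inner A η y : A)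
        rw [show (inner A η (x + y) : A) = inner A η x + inner A η y from OldCStarModule.inner_add_right (A := A)]
        exact inner_ext_right _ _ fun ζ => by
          rw [OldCStarModule.inner_add_right (A := A), OldCStarModule.inner_op_smul_right (A := A),
            OldCStarModule.inner_op_smul_right (A := A), OldCStarModule.inner_op_smul_right (A := A), mul_add]
      map_smul' := fun c x => by
        show ξ <• (inner A η (c • x) : A) = c • (ξ <• (inner A η x : A))
        rw [show (inner A η (c • x) : A) = c • inner A η x from OldCStarModule.inner_smul_right_complex (A := A)]
        exact inner_ext_right _ _ fun ζ => by
          rw [OldCStarModule.inner_smul_right_complex (A := A), OldCStarModule.inner_op_smul_right (A := A),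
            OldCStarModule.inner_op_smul_right (A := A), mul_smul_comm] }
    (‖ξ‖ * ‖η‖)
    (fun ζ => by
      calc ‖ξ <• (inner A η ζ : A)‖ ≤ ‖ξ‖ * ‖(inner A η ζ : A)‖ := norm_op_smul_le _ _
        _ ≤ ‖ξ‖ * (‖η‖ * ‖ζ‖) := by gcongr; exact OldCStarModule.norm_inner_le E
        _ = ‖ξ‖ * ‖η‖ * ‖ζ‖ := by ring)

end RankOneDefs

/-- The set `K(E)` of "compact" operators on the Hilbert C⋆-module `E`: the closed
linear span of the rank-one operators inside the bounded operators on `E`. -/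
noncomputable def compactsSet (A : Type*) (E : Type*)
    [NonUnitalCStarAlgebra A] [PartialOrder A] [StarOrderedRing A]
    [NormedAddCommGroup E] [NormedSpace ℂ E] [SMul Aᵐᵒᵖ E] [OldCStarModule A E] :
    Set (E →L[ℂ] E) :=
  closure (Submodule.span ℂ (Set.range fun p : E × E => rankOne A p.1 p.2) :
    Set (E →L[ℂ] E))

/-- `T` and `S` are mutually adjoint operators on the Hilbert C⋆-module `E`. -/
def IsAdjointPairOn (A : Type*) {E : Type*}
    [NonUnitalCStarAlgebra A] [PartialOrder A] [StarOrderedRing A]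
    [NormedAddCommGroup E] [NormedSpace ℂ E] [SMul Aᵐᵒᵖ E] [OldCStarModule A E]
    (T S : E →L[ℂ] E) : Prop :=
  ∀ ζ ζ' : E, (inner A (T ζ) ζ' : A) = inner A ζ (S ζ')

open scoped RightActions in
/-- Let `u : E → E` be a bijective `α`-morphism of Hilbert C⋆-modules,
where `α` is an automorphism of the C⋆-algebra `A`. Then the map defined on rank-one
operators by `θ_{ξ,η} ↦ θ_{u ξ, u η}` extends to a ⋆-automorphism `β` of `K(E)`, whose
inverse `γ` satisfies `γ (θ_{ξ,η}) = θ_{u⁻¹ ξ, u⁻¹ η}`. -/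
theorem rankOne_conjugation_extends_to_star_automorphism
    {A E : Type*}
    [NonUnitalCStarAlgebra A] [PartialOrder A] [StarOrderedRing A]
    [NormedAddCommGroup E] [NormedSpace ℂ E] [SMul Aᵐᵒᵖ E] [OldCStarModule A E]
    (α : A →⋆ₙₐ[ℂ] A) (hαbij : Function.Bijective α)
    (u v : E → E)
    (hu : ∀ ξ η : E, (inner A (u ξ) (u η) : A) = α (inner A ξ η : A))
    (huv : Function.RightInverse v u) (hvu : Function.LeftInverse v u) :
    ∃ β γ : (E →L[ℂ] E) → (E →L[ℂ] E),
      (∀ ξ η : E, β (rankOne A ξ η) = rankOne A (u ξ) (u η)) ∧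
      (∀ ξ η : E, γ (rankOne A ξ η) = rankOne A (v ξ) (v η)) ∧
      Set.MapsTo β (compactsSet A E) (compactsSet A E) ∧
      Set.MapsTo γ (compactsSet A E) (compactsSet A E) ∧
      (∀ T ∈ compactsSet A E, γ (β T) = T) ∧
      (∀ T ∈ compactsSet A E, β (γ T) = T) ∧
      (∀ T S, T ∈ compactsSet A E → S ∈ compactsSet A E → β (T + S) = β T + β S) ∧
      (∀ (c : ℂ) T, T ∈ compactsSet A E → β (c • T) = c • β T) ∧
      (∀ T S, T ∈ compactsSet A E → S ∈ compactsSet A E →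
        T * S ∈ compactsSet A E ∧ β (T * S) = β T * β S) ∧
      (∀ T S, T ∈ compactsSet A E → S ∈ compactsSet A E →
        IsAdjointPairOn A T S → IsAdjointPairOn A (β T) (β S)) ∧
      ContinuousOn β (compactsSet A E) := by
  classical
  -- basic coercion lemma for `rankOne`
  have rankOne_apply : ∀ ξ η ζ : E, rankOne A ξ η ζ = ξ <• (inner A η ζ : A) :=
    fun _ _ _ => rfl
  have hαnorm : ∀ a : A, ‖α a‖ = ‖a‖ := fun a =>
    NonUnitalStarAlgHom.norm_map α hαbij.injective a
  have u_inj : Function.Injective u := hvu.injective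
  have u_surj : Function.Surjective u := huv.surjective
  -- `u` is additive, ℂ-linear and preserves right scalar multiplication up to `α`
  have u_add : ∀ x y : E, u (x + y) = u x + u y := by
    intro x y
    refine inner_ext_right (A := A) _ _ fun ζ => ?_
    obtain ⟨ζ', rfl⟩ := u_surj ζ
    rw [hu, OldCStarModule.inner_add_right (A := A), OldCStarModule.inner_add_right (A := A), map_add, hu, hu]
  have u_smul : ∀ (c : ℂ) (x : E), u (c • x) = c • u x := by
    intro c x
    refine inner_ext_right (A := A) _ _ fun ζ => ?_
    obtain ⟨ζ', rfl⟩ := u_surj ζ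
    rw [hu, OldCStarModule.inner_smul_right_complex (A := A), OldCStarModule.inner_smul_right_complex (A := A),
      map_smul, hu]
  have u_norm : ∀ x : E, ‖u x‖ = ‖x‖ := by
    intro x
    have h2 : ‖u x‖ ^ 2 = ‖x‖ ^ 2 := by
      rw [OldCStarModule.norm_sq_eq (A := A), OldCStarModule.norm_sq_eq (A := A), hu, hαnorm]
    exact (sq_eq_sq₀ (norm_nonneg _) (norm_nonneg _)).mp h2
  have u_opsmul : ∀ (x : E) (a : A), u (x <• a) = u x <• α a := by
    intro x a
    refine inner_ext_right (A := A) _ _ fun ζ => ?_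
    obtain ⟨ζ', rfl⟩ := u_surj ζ
    rw [hu, OldCStarModule.inner_op_smul_right (A := A), OldCStarModule.inner_op_smul_right (A := A), map_mul, hu]
  -- corresponding facts for `v`
  have v_add : ∀ x y : E, v (x + y) = v x + v y := by
    intro x y
    apply u_inj
    rw [huv, u_add, huv, huv]
  have v_smul : ∀ (c : ℂ) (x : E), v (c • x) = c • v x := by
    intro c x
    apply u_inj
    rw [huv, u_smul, huv]
  have v_norm : ∀ x : E, ‖v x‖ = ‖x‖ := by
    intro x
    rw [← u_norm (v x), huv]
  -- package `u` and `v` as continuous linear maps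
  set U : E →L[ℂ] E := LinearMap.mkContinuous
    { toFun := u, map_add' := u_add, map_smul' := u_smul } 1
    (fun x => by show ‖u x‖ ≤ 1 * ‖x‖; rw [u_norm, one_mul]) with hU
  set V : E →L[ℂ] E := LinearMap.mkContinuous
    { toFun := v, map_add' := v_add, map_smul' := v_smul } 1
    (fun x => by show ‖v x‖ ≤ 1 * ‖x‖; rw [v_norm, one_mul]) with hV
  have Uapp : ∀ x : E, U x = u x := fun _ => rfl
  have Vapp : ∀ x : E, V x = v x := fun _ => rfl
  -- the candidate maps
  set β : (E →L[ℂ] E) → (E →L[ℂ] E) := fun T => U.comp (T.comp V) with hβ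
  set γ : (E →L[ℂ] E) → (E →L[ℂ] E) := fun T => V.comp (T.comp U) with hγ
  have βapp : ∀ (T : E →L[ℂ] E) (ζ : E), β T ζ = u (T (v ζ)) := fun _ _ => rfl
  have γapp : ∀ (T : E →L[ℂ] E) (ζ : E), γ T ζ = v (T (u ζ)) := fun _ _ => rfl
  -- action on rank-one operators
  have hβrank : ∀ ξ η : E, β (rankOne A ξ η) = rankOne A (u ξ) (u η) := by
    intro ξ η
    ext ζ
    rw [βapp, rankOne_apply, rankOne_apply, u_opsmul, ← hu, huv]
  have hγrank : ∀ ξ η : E, γ (rankOne A ξ η) = rankOne A (v ξ) (v η) := by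
    intro ξ η
    ext ζ
    rw [γapp, rankOne_apply, rankOne_apply]
    apply u_inj
    rw [huv, u_opsmul, huv, ← hu, huv]
  -- linearity of `β` and `γ` (globally)
  have βadd : ∀ T S : E →L[ℂ] E, β (T + S) = β T + β S := by
    intro T S
    simp only [hβ, ContinuousLinearMap.add_comp, ContinuousLinearMap.comp_add]
  have βsmul : ∀ (c : ℂ) (T : E →L[ℂ] E), β (c • T) = c • β T := by
    intro c T
    simp only [hβ, ContinuousLinearMap.smul_comp, ContinuousLinearMap.comp_smul]
  have γadd : ∀ T S : E →L[ℂ] E, γ (T + S) = γ T + γ S := by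
    intro T S
    simp only [hγ, ContinuousLinearMap.add_comp, ContinuousLinearMap.comp_add]
  have γsmul : ∀ (c : ℂ) (T : E →L[ℂ] E), γ (c • T) = c • γ T := by
    intro c T
    simp only [hγ, ContinuousLinearMap.smul_comp, ContinuousLinearMap.comp_smul]
  have βzero : β 0 = 0 := by
    simp only [hβ, ContinuousLinearMap.zero_comp, ContinuousLinearMap.comp_zero]
  have γzero : γ 0 = 0 := by
    simp only [hγ, ContinuousLinearMap.zero_comp, ContinuousLinearMap.comp_zero]
  -- inverse relations (globally)
  have γβ : ∀ T : E →L[ℂ] E, γ (β T) = T := by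
    intro T
    ext ζ
    rw [γapp, βapp, hvu, hvu]
  have βγ : ∀ T : E →L[ℂ] E, β (γ T) = T := by
    intro T
    ext ζ
    rw [βapp, γapp, huv, huv]
  -- multiplicativity (globally)
  have βmul : ∀ T S : E →L[ℂ] E, β (T * S) = β T * β S := by
    intro T S
    ext ζ
    show u ((T * S) (v ζ)) = u (T (v (u (S (v ζ)))))
    rw [hvu]
    rfl
  -- continuity of `β` and `γ`
  have βcont : Continuous β := by
    exact continuous_const.clm_comp (continuous_id.clm_comp continuous_const)
  have γcont : Continuous γ := by
    exact continuous_const.clm_comp (continuous_id.clm_comp continuous_const)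
  -- the span of rank-one operators
  set M : Submodule ℂ (E →L[ℂ] E) :=
    Submodule.span ℂ (Set.range fun p : E × E => rankOne A p.1 p.2) with hM
  have hcs : compactsSet A E = closure (M : Set (E →L[ℂ] E)) := rfl
  -- product of rank-one operators is rank-one
  have rankOne_mul : ∀ ξ η ξ' η' : E,
      rankOne A ξ η * rankOne A ξ' η' = rankOne A (ξ <• (inner A η ξ' : A)) η' := by
    intro ξ η ξ' η'
    ext ζ
    show ξ <• (inner A η (ξ' <• (inner A η' ζ : A)) : A)
        = (ξ <• (inner A η ξ' : A)) <• (inner A η' ζ : A)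
    rw [OldCStarModule.inner_op_smul_right (A := A)]
    refine inner_ext_right (A := A) _ _ fun ρ => ?_
    rw [OldCStarModule.inner_op_smul_right (A := A), OldCStarModule.inner_op_smul_right (A := A),
      OldCStarModule.inner_op_smul_right (A := A), mul_assoc]
  -- `M` is closed under multiplication
  have Mmul : ∀ T S : E →L[ℂ] E, T ∈ M → S ∈ M → T * S ∈ M := by
    intro T S hT hS
    induction hT, hS using Submodule.span_induction₂ with
    | mem_mem x y hx hy =>
      obtain ⟨⟨ξ, η⟩, rfl⟩ := hx
      obtain ⟨⟨ξ', η'⟩, rfl⟩ := hy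
      rw [rankOne_mul]
      exact Submodule.subset_span ⟨(_, _), rfl⟩
    | zero_left y hy => rw [zero_mul]; exact M.zero_mem
    | zero_right x hx => rw [mul_zero]; exact M.zero_mem
    | add_left x y z hx hy hz h1 h2 => rw [add_mul]; exact M.add_mem h1 h2
    | add_right x y z hx hy hz h1 h2 => rw [mul_add]; exact M.add_mem h1 h2
    | smul_left r x y hx hy h => rw [smul_mul_assoc]; exact M.smul_mem r h
    | smul_right r x y hx hy h => rw [mul_smul_comm]; exact M.smul_mem r h
  -- upgrade to a non-unital subalgebra and take its closure to handle products
  set Malg : NonUnitalSubalgebra ℂ (E →L[ℂ] E) :=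
    { M with mul_mem' := fun hx hy => Mmul _ _ hx hy } with hMalg
  have hMalg_carrier : (Malg : Set (E →L[ℂ] E)) = (M : Set (E →L[ℂ] E)) := rfl
  have mul_mem_cs : ∀ T S : E →L[ℂ] E, T ∈ compactsSet A E → S ∈ compactsSet A E →
      T * S ∈ compactsSet A E := by
    intro T S hT hS
    have hT' : T ∈ Malg.topologicalClosure := hT
    have hS' : S ∈ Malg.topologicalClosure := hS
    exact mul_mem hT' hS'
  -- `β` and `γ` map `M` into `M`
  have βM : ∀ T ∈ M, β T ∈ M := by
    intro T hT
    induction hT using Submodule.span_induction with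
    | mem x hx =>
      obtain ⟨⟨ξ, η⟩, rfl⟩ := hx
      rw [hβrank]
      exact Submodule.subset_span ⟨(_, _), rfl⟩
    | zero => rw [βzero]; exact M.zero_mem
    | add x y hx hy h1 h2 => rw [βadd]; exact M.add_mem h1 h2
    | smul c x hx h => rw [βsmul]; exact M.smul_mem c h
  have γM : ∀ T ∈ M, γ T ∈ M := by
    intro T hT
    induction hT using Submodule.span_induction with
    | mem x hx =>
      obtain ⟨⟨ξ, η⟩, rfl⟩ := hx
      rw [hγrank]
      exact Submodule.subset_span ⟨(_, _), rfl⟩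
    | zero => rw [γzero]; exact M.zero_mem
    | add x y hx hy h1 h2 => rw [γadd]; exact M.add_mem h1 h2
    | smul c x hx h => rw [γsmul]; exact M.smul_mem c h
  -- `β` and `γ` map the compacts into the compacts
  have βmaps : Set.MapsTo β (compactsSet A E) (compactsSet A E) := by
    intro T hT
    rw [hcs] at hT ⊢
    have h1 : β T ∈ β '' closure (M : Set (E →L[ℂ] E)) := ⟨T, hT, rfl⟩
    have h2 : β '' closure (M : Set (E →L[ℂ] E)) ⊆ closure (β '' (M : Set (E →L[ℂ] E))) :=
      image_closure_subset_closure_image βcont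
    have h3 : closure (β '' (M : Set (E →L[ℂ] E))) ⊆ closure (M : Set (E →L[ℂ] E)) :=
      closure_mono (by rintro _ ⟨x, hx, rfl⟩; exact βM x hx)
    exact h3 (h2 h1)
  have γmaps : Set.MapsTo γ (compactsSet A E) (compactsSet A E) := by
    intro T hT
    rw [hcs] at hT ⊢
    have h1 : γ T ∈ γ '' closure (M : Set (E →L[ℂ] E)) := ⟨T, hT, rfl⟩
    have h2 : γ '' closure (M : Set (E →L[ℂ] E)) ⊆ closure (γ '' (M : Set (E →L[ℂ] E))) :=
      image_closure_subset_closure_image γcont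
    have h3 : closure (γ '' (M : Set (E →L[ℂ] E))) ⊆ closure (M : Set (E →L[ℂ] E)) :=
      closure_mono (by rintro _ ⟨x, hx, rfl⟩; exact γM x hx)
    exact h3 (h2 h1)
  -- adjoints
  have βadj : ∀ T S : E →L[ℂ] E, IsAdjointPairOn A T S → IsAdjointPairOn A (β T) (β S) := by
    intro T S h ζ ζ'
    rw [βapp, βapp]
    calc (inner A (u (T (v ζ))) ζ' : A) = inner A (u (T (v ζ))) (u (v ζ')) := by rw [huv]
      _ = α (inner A (T (v ζ)) (v ζ')) := hu _ _
      _ = α (inner A (v ζ) (S (v ζ'))) := by rw [h]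
      _ = inner A (u (v ζ)) (u (S (v ζ'))) := (hu _ _).symm
      _ = inner A ζ (u (S (v ζ'))) := by rw [huv]
  refine ⟨β, γ, hβrank, hγrank, βmaps, γmaps, fun T _ => γβ T, fun T _ => βγ T,
    fun T S _ _ => βadd T S, fun c T _ => βsmul c T,
    fun T S hT hS => ⟨mul_mem_cs T S hT hS, βmul T S⟩,
    fun T S _ _ h => βadj T S h, βcont.continuousOn⟩
end

section
/- Let E be a Hilbert A-module over a C*-algebra A, let F be a Hilbert B-module, and let Φ : A → L(F) be a nondegenerate *-homomorphism. Suppose u : E → E is a bijective α-morphism (α ∈ Aut(A)) and v ∈ Aut(F) is a module automorphism of F (with associated automorphism α^v of B) satisfying the covariance relation v ∘ Φ(a) ∘ v⁻¹ = Φ(α(a)) for all a ∈ A. Then there is a unique bounded linear map w on the interior tensor product E ⊗_Φ F such that w(ξ ⊗ η) = u(ξ) ⊗ v(η), and w satisfies ⟨w(x), w(y)⟩ = α^v(⟨x, y⟩) for all x, y ∈ E ⊗_Φ F. -/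
open scoped RightActions

/-- The Hilbert C⋆-module class as it stood in the older Mathlib: a *right* `A`-module
(action of `Aᵐᵒᵖ`) with `⟪x, y <• a⟫ = ⟪x, y⟫ * a`. (Mathlib's `CStarModule` now uses a
left action with `⟪x, a • y⟫ = a * ⟪x, y⟫`, a different notion.) -/
class RightCStarModule (A E : Type*) [NonUnitalSemiring A] [StarRing A]
    [Module ℂ A] [AddCommGroup E] [Module ℂ E] [PartialOrder A] [SMul Aᵐᵒᵖ E] [Norm A] [Norm E]
    extends Inner A E where
  inner_add_right {x} {y} {z} : inner x (y + z) = inner x y + inner x z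
  inner_self_nonneg {x} : 0 ≤ inner x x
  inner_self {x} : inner x x = 0 ↔ x = 0
  inner_op_smul_right {a : A} {x y : E} : inner x (y <• a) = inner x y * a
  inner_smul_right_complex {z : ℂ} {x} {y} : inner x (z • y) = z • inner x y
  star_inner x y : star (inner x y) = inner y x
  norm_eq_sqrt_norm_inner_self x : ‖x‖ = Real.sqrt ‖inner x x‖

section RCMHelpers

variable {A E : Type*} [NonUnitalCStarAlgebra A] [PartialOrder A] [StarOrderedRing A]
  [NormedAddCommGroup E] [NormedSpace ℂ E] [SMul Aᵐᵒᵖ E] [RightCStarModule A E]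

lemma rcm_inner_add_left {x y z : E} : inner A (x + y) z = inner A x z + inner A y z := by
  rw [← RightCStarModule.star_inner z (x + y), RightCStarModule.inner_add_right, star_add,
    RightCStarModule.star_inner, RightCStarModule.star_inner]

lemma rcm_inner_smul_left_complex {c : ℂ} {x y : E} : inner A (c • x) y = star c • inner A x y := by
  rw [← RightCStarModule.star_inner y (c • x), RightCStarModule.inner_smul_right_complex,
    star_smul, RightCStarModule.star_inner]

lemma rcm_inner_op_smul_left {a : A} {x y : E} : inner A (x <• a) y = star a * inner A x y := by
  rw [← RightCStarModule.star_inner y (x <• a), RightCStarModule.inner_op_smul_right,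
    star_mul, RightCStarModule.star_inner]

lemma rcm_inner_zero_left {x : E} : inner A (0 : E) x = 0 := by
  have h := rcm_inner_add_left (A := A) (x := (0 : E)) (y := 0) (z := x)
  rw [add_zero] at h
  exact (left_eq_add.mp h)

lemma rcm_inner_zero_right {x : E} : inner A x (0 : E) = 0 := by
  have h := RightCStarModule.inner_add_right (A := A) (x := x) (y := (0 : E)) (z := 0)
  rw [add_zero] at h
  exact (left_eq_add.mp h)

lemma rcm_inner_sub_right {x y z : E} : inner A x (y - z) = inner A x y - inner A x z := by
  rw [sub_eq_add_neg, RightCStarModule.inner_add_right, ← neg_one_smul ℂ z,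
    RightCStarModule.inner_smul_right_complex, neg_one_smul, sub_eq_add_neg]

lemma rcm_inner_sub_left {x y z : E} : inner A (x - y) z = inner A x z - inner A y z := by
  rw [sub_eq_add_neg, rcm_inner_add_left, ← neg_one_smul ℂ y,
    rcm_inner_smul_left_complex, star_neg, star_one, neg_one_smul, sub_eq_add_neg]

lemma rcm_inner_smul_right_real {r : ℝ} {x y : E} : inner A x (r • y) = r • inner A x y := by
  rw [← Complex.coe_smul, RightCStarModule.inner_smul_right_complex, Complex.coe_smul]

lemma rcm_inner_smul_left_real {r : ℝ} {x y : E} : inner A (r • x) y = r • inner A x y := by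
  rw [← Complex.coe_smul, rcm_inner_smul_left_complex, Complex.star_def, Complex.conj_ofReal,
    Complex.coe_smul]

lemma rcm_cs {x y : E} : inner A y x * inner A x y ≤ ‖x‖ ^ 2 • inner A y y := by
  rcases eq_or_ne x 0 with h | h
  · simp [h, rcm_inner_zero_left, rcm_inner_zero_right]
  · have h₁ : ∀ (a : A),
        (0 : A) ≤ ‖x‖ ^ 2 • (star a * a) - ‖x‖ ^ 2 • (star a * inner A x y)
                  - ‖x‖ ^ 2 • (inner A y x * a) + ‖x‖ ^ 2 • (‖x‖ ^ 2 • inner A y y) := fun a => by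
      calc (0 : A) ≤ inner A (x <• a - ‖x‖ ^ 2 • y) (x <• a - ‖x‖ ^ 2 • y) := by
                      exact RightCStarModule.inner_self_nonneg
            _ = star a * inner A x x * a - ‖x‖ ^ 2 • (star a * inner A x y)
                  - ‖x‖ ^ 2 • (inner A y x * a) + ‖x‖ ^ 2 • (‖x‖ ^ 2 • inner A y y) := by
                      simp only [rcm_inner_sub_right, RightCStarModule.inner_op_smul_right,
                        rcm_inner_sub_left, rcm_inner_op_smul_left, rcm_inner_smul_left_real,
                        rcm_inner_smul_right_real, smul_mul_assoc, mul_smul_comm, smul_sub,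
                        sub_mul, mul_assoc]
                      abel
            _ ≤ ‖x‖ ^ 2 • (star a * a) - ‖x‖ ^ 2 • (star a * inner A x y)
                  - ‖x‖ ^ 2 • (inner A y x * a) + ‖x‖ ^ 2 • (‖x‖ ^ 2 • inner A y y) := by
                      gcongr
                      calc _ ≤ ‖inner A x x‖ • (star a * a) :=
                          CStarAlgebra.star_left_conjugate_le_norm_smul (hb := RightCStarModule.star_inner x x)
                        _ = (√‖inner A x x‖) ^ 2 • (star a * a) := by
                          rw [Real.sq_sqrt]
                          positivity
                        _ = ‖x‖ ^ 2 • (star a * a) := by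
                          rw [← RightCStarModule.norm_eq_sqrt_norm_inner_self]
    specialize h₁ (inner A x y)
    simp only [RightCStarModule.star_inner, sub_self, zero_sub, le_neg_add_iff_add_le,
      add_zero] at h₁
    rwa [smul_le_smul_iff_of_pos_left (pow_pos (norm_pos_iff.mpr h) _)] at h₁

lemma rcm_norm_inner_le {x y : E} : ‖inner A x y‖ ≤ ‖x‖ * ‖y‖ := by
  have := calc ‖inner A x y‖ ^ 2 = ‖inner A y x * inner A x y‖ := by
                rw [← RightCStarModule.star_inner x y, CStarRing.norm_star_mul_self, pow_two]
    _ ≤ ‖‖x‖ ^ 2 • inner A y y‖ := by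
                refine CStarAlgebra.norm_le_norm_of_nonneg_of_le ?_ rcm_cs
                rw [← RightCStarModule.star_inner x y]
                exact star_mul_self_nonneg (inner A x y)
    _ = ‖x‖ ^ 2 * ‖inner A y y‖ := by simp [norm_smul]
    _ = ‖x‖ ^ 2 * ‖y‖ ^ 2 := by
                simp only [RightCStarModule.norm_eq_sqrt_norm_inner_self (A := A), norm_nonneg,
                  Real.sq_sqrt]
    _ = (‖x‖ * ‖y‖) ^ 2 := by simp only [mul_pow]
  refine (pow_le_pow_iff_left₀ (norm_nonneg (inner A x y)) ?_ (by simp)).mp this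
  exact mul_nonneg (norm_nonneg _) (norm_nonneg _)

variable (A E) in
noncomputable def rcmInnerSL : E →L⋆[ℂ] E →L[ℂ] A :=
  LinearMap.mkContinuous₂
    (LinearMap.mk₂'ₛₗ (starRingEnd ℂ) (RingHom.id ℂ) (fun x y : E => inner A x y)
      (fun _ _ _ => rcm_inner_add_left) (fun _ _ _ => rcm_inner_smul_left_complex)
      (fun _ _ _ => RightCStarModule.inner_add_right)
      (fun _ _ _ => RightCStarModule.inner_smul_right_complex)) 1
    (fun x y => by rw [one_mul]; exact rcm_norm_inner_le)

lemma rcm_continuous_inner : Continuous (fun p : E × E => inner A p.1 p.2) := by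
  show Continuous (fun p : E × E => rcmInnerSL A E p.1 p.2)
  fun_prop

end RCMHelpers

/-- Let `E` be a Hilbert `A`-module, `F` a Hilbert `B`-module,
`Φ : A → L(F)` a nondegenerate ⋆-homomorphism, and `T = E ⊗_Φ F` the interior tensor
product (axiomatised as a complete Hilbert `B`-module equipped with a bilinear map
`tmul` with dense span and the canonical inner product formula). If `u : E → E` is a
bijective `α`-morphism and `v ∈ Aut(F)` (with associated automorphism `αv` of `B`)
satisfies the covariance relation `v ∘ Φ a ∘ v⁻¹ = Φ (α a)`, then there is a unique
bounded linear map `w` on `E ⊗_Φ F` with `w (ξ ⊗ η) = u ξ ⊗ v η`, and moreover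
`⟪w x, w y⟫ = αv ⟪x, y⟫` for all `x y ∈ E ⊗_Φ F`. -/
theorem covariant_tensor_product_map
    {A B E F T : Type*}
    [NonUnitalCStarAlgebra A] [PartialOrder A] [StarOrderedRing A]
    [NonUnitalCStarAlgebra B] [PartialOrder B] [StarOrderedRing B]
    [NormedAddCommGroup E] [NormedSpace ℂ E] [SMul Aᵐᵒᵖ E] [RightCStarModule A E]
    [NormedAddCommGroup F] [NormedSpace ℂ F] [SMul Bᵐᵒᵖ F] [RightCStarModule B F]
    [NormedAddCommGroup T] [NormedSpace ℂ T] [SMul Bᵐᵒᵖ T] [RightCStarModule B T]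
    [CompleteSpace T]
    -- `Φ : A → L(F)`, a ⋆-homomorphism, nondegenerate
    (Φ : A →ₙₐ[ℂ] (F →L[ℂ] F))
    (hΦstar : ∀ (a : A) (η η' : F), (inner B (Φ a η) η' : B) = inner B η (Φ (star a) η'))
    (hΦnondeg : Dense (Submodule.span ℂ {η' : F | ∃ (a : A) (η : F), η' = Φ a η} : Set F))
    -- the interior tensor product `T = E ⊗_Φ F`
    (tmul : E → F → T)
    (htmul_dense : Dense
      (Submodule.span ℂ {x : T | ∃ (ξ : E) (η : F), x = tmul ξ η} : Set T))
    (htmul_inner : ∀ (ξ₁ ξ₂ : E) (η₁ η₂ : F),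
      (inner B (tmul ξ₁ η₁) (tmul ξ₂ η₂) : B) = inner B η₁ (Φ (inner A ξ₁ ξ₂ : A) η₂))
    -- `u`, a bijective `α`-morphism of `E`
    (α : A →⋆ₙₐ[ℂ] A) (hαbij : Function.Bijective α)
    (u : E → E) (hubij : Function.Bijective u)
    (hu : ∀ ξ ξ' : E, (inner A (u ξ) (u ξ') : A) = α (inner A ξ ξ' : A))
    -- `v`, a module automorphism of `F` with associated automorphism `αv` of `B`
    (αv : B →⋆ₙₐ[ℂ] B) (hαvbij : Function.Bijective αv)
    (v : F → F) (hvbij : Function.Bijective v)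
    (hv : ∀ η η' : F, (inner B (v η) (v η') : B) = αv (inner B η η' : B))
    -- the covariance relation `v ∘ Φ a ∘ v⁻¹ = Φ (α a)`
    (hcov : ∀ (a : A) (η : F), v (Φ a η) = Φ (α a) (v η)) :
    (∃! w : T →L[ℂ] T, ∀ (ξ : E) (η : F), w (tmul ξ η) = tmul (u ξ) (v η)) ∧
    (∀ w : T →L[ℂ] T, (∀ (ξ : E) (η : F), w (tmul ξ η) = tmul (u ξ) (v η)) →
      ∀ x y : T, (inner B (w x) (w y) : B) = αv (inner B x y : B)) := by
  classical
  set S : Set T := {x : T | ∃ (ξ : E) (η : F), x = tmul ξ η} with hS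
  set gens : Set (T × T) :=
    {p : T × T | ∃ (ξ : E) (η : F), p = (tmul ξ η, tmul (u ξ) (v η))} with hgens
  set G : Submodule ℂ (T × T) := Submodule.span ℂ gens with hG
  -- the basic covariance computation on simple tensors
  have base : ∀ (ξ₁ ξ₂ : E) (η₁ η₂ : F),
      (inner B (tmul (u ξ₁) (v η₁)) (tmul (u ξ₂) (v η₂)) : B)
        = αv (inner B (tmul ξ₁ η₁) (tmul ξ₂ η₂) : B) := by
    intro ξ₁ ξ₂ η₁ η₂
    rw [htmul_inner, hu, ← hcov, hv, ← htmul_inner]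
  -- the key inner-product identity on the graph submodule `G`
  have key : ∀ p ∈ G, ∀ q ∈ G, (inner B p.2 q.2 : B) = αv (inner B p.1 q.1 : B) := by
    intro p hp
    induction hp using Submodule.span_induction with
    | mem x hx =>
      obtain ⟨ξ₁, η₁, rfl⟩ := hx
      intro q hq
      induction hq using Submodule.span_induction with
      | mem y hy =>
        obtain ⟨ξ₂, η₂, rfl⟩ := hy
        exact base ξ₁ ξ₂ η₁ η₂
      | zero => simp [rcm_inner_zero_right]
      | add a b ha hb iha ihb =>
        simp only [Prod.fst_add, Prod.snd_add, RightCStarModule.inner_add_right, map_add, iha, ihb]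
      | smul z a ha iha =>
        simp only [Prod.smul_fst, Prod.smul_snd, RightCStarModule.inner_smul_right_complex,
          map_smul, iha]
    | zero => intro q hq; simp [rcm_inner_zero_left]
    | add a b ha hb iha ihb =>
      intro q hq
      simp only [Prod.fst_add, Prod.snd_add, rcm_inner_add_left, map_add,
        iha q hq, ihb q hq]
    | smul z a ha iha =>
      intro q hq
      simp only [Prod.smul_fst, Prod.smul_snd, rcm_inner_smul_left_complex,
        map_smul, iha q hq]
  -- `G` is the graph of a linear map
  have hker : ∀ (x : T × T), x ∈ G → x.fst = 0 → x.snd = 0 := by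
    intro x hx h0
    have h := key x hx x hx
    rw [h0] at h
    simp only [rcm_inner_zero_left, map_zero] at h
    exact RightCStarModule.inner_self.mp h
  -- the domain of the associated partial linear map is the span of simple tensors
  have himg : (LinearMap.fst ℂ T T) '' gens = S := by
    ext x
    constructor
    · rintro ⟨p, ⟨ξ, η, rfl⟩, rfl⟩
      exact ⟨ξ, η, rfl⟩
    · rintro ⟨ξ, η, rfl⟩
      exact ⟨(tmul ξ η, tmul (u ξ) (v η)), ⟨ξ, η, rfl⟩, rfl⟩
  have hdom : G.map (LinearMap.fst ℂ T T) = Submodule.span ℂ S := by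
    rw [hG, Submodule.map_span, himg]
  have hdomdense : Dense ((G.map (LinearMap.fst ℂ T T) : Submodule ℂ T) : Set T) := by
    rw [hdom]; exact htmul_dense
  -- the partial linear map and its basic properties
  set w₀ := G.toLinearPMap with hw₀
  have hdom' : w₀.domain = G.map (LinearMap.fst ℂ T T) := rfl
  have hgraphmem : ∀ x : G.map (LinearMap.fst ℂ T T), (x.val, w₀ x) ∈ G :=
    fun x => Submodule.mem_graph_toLinearPMap hker x
  have hinner₀ : ∀ x y : G.map (LinearMap.fst ℂ T T),
      (inner B (w₀ x) (w₀ y) : B) = αv (inner B x.val y.val : B) :=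
    fun x y => key _ (hgraphmem x) _ (hgraphmem y)
  have hαviso : ∀ b : B, ‖αv b‖ = ‖b‖ :=
    fun b => NonUnitalStarAlgHom.norm_map αv hαvbij.injective b
  have hnorm₀ : ∀ x : G.map (LinearMap.fst ℂ T T), ‖w₀ x‖ = ‖x.val‖ := by
    intro x
    rw [RightCStarModule.norm_eq_sqrt_norm_inner_self (A := B) (x := w₀ x),
      RightCStarModule.norm_eq_sqrt_norm_inner_self (A := B) (x := x.val), hinner₀ x x, hαviso]
  -- the continuous linear map on the domain and its extension
  set f : (G.map (LinearMap.fst ℂ T T)) →L[ℂ] T :=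
    LinearMap.mkContinuous w₀.toFun 1 (fun x => by
      show ‖w₀ x‖ ≤ 1 * ‖x‖
      rw [hnorm₀ x, one_mul]; rfl) with hf
  set e : (G.map (LinearMap.fst ℂ T T)) →L[ℂ] T :=
    (G.map (LinearMap.fst ℂ T T)).subtypeL with he
  have hdense : DenseRange e := by
    have : Set.range e = ((G.map (LinearMap.fst ℂ T T) : Submodule ℂ T) : Set T) :=
      Subtype.range_coe
    rw [DenseRange, this]
    exact hdomdense
  have hui : IsUniformInducing e := isometry_subtype_coe.isUniformInducing
  set w : T →L[ℂ] T := f.extend e with hwdef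
  have hwe : ∀ x : G.map (LinearMap.fst ℂ T T), w (x : T) = w₀ x := by
    intro x
    exact ContinuousLinearMap.extend_eq f hdense hui x
  -- `w` sends simple tensors correctly
  have hwtmul : ∀ (ξ : E) (η : F), w (tmul ξ η) = tmul (u ξ) (v η) := by
    intro ξ η
    have hg2 : (tmul ξ η, tmul (u ξ) (v η)) ∈ G := Submodule.subset_span ⟨ξ, η, rfl⟩
    have hmem : tmul ξ η ∈ G.map (LinearMap.fst ℂ T T) :=
      ⟨(tmul ξ η, tmul (u ξ) (v η)), hg2, rfl⟩
    set x : G.map (LinearMap.fst ℂ T T) := ⟨tmul ξ η, hmem⟩ with hx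
    have hg1 := hgraphmem x
    have hdiff : ((x.val, w₀ x) - (tmul ξ η, tmul (u ξ) (v η))) ∈ G := G.sub_mem hg1 hg2
    have h0 : ((x.val, w₀ x) - (tmul ξ η, tmul (u ξ) (v η))).1 = 0 := by
      simp [hx]
    have := hker _ hdiff h0
    have hval : w₀ x = tmul (u ξ) (v η) := by
      have h2 : ((x.val, w₀ x) - (tmul ξ η, tmul (u ξ) (v η))).2 = w₀ x - tmul (u ξ) (v η) := rfl
      rw [h2] at this
      exact sub_eq_zero.mp this
    calc w (tmul ξ η) = w (x : T) := rfl
      _ = w₀ x := hwe x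
      _ = tmul (u ξ) (v η) := hval
  refine ⟨⟨w, hwtmul, ?_⟩, ?_⟩
  · -- uniqueness
    intro w' hw'
    apply ContinuousLinearMap.ext_on htmul_dense
    rintro x ⟨ξ, η, rfl⟩
    rw [hw' ξ η, hwtmul ξ η]
  · -- the inner-product identity for any such `w`
    intro w' hw' x y
    have hgraph : ∀ x ∈ Submodule.span ℂ S, (x, w' x) ∈ G := by
      intro x hx
      induction hx using Submodule.span_induction with
      | mem z hz =>
        obtain ⟨ξ, η, rfl⟩ := hz
        rw [hw' ξ η]
        exact Submodule.subset_span ⟨ξ, η, rfl⟩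
      | zero =>
        have h0 : ((0 : T), w' 0) = (0 : T × T) := by simp
        rw [h0]; exact G.zero_mem
      | add a b ha hb iha ihb =>
        have : ((a + b : T), w' (a + b)) = (a, w' a) + (b, w' b) := by
          simp [Prod.ext_iff]
        rw [this]; exact G.add_mem iha ihb
      | smul z a ha iha =>
        have : ((z • a : T), w' (z • a)) = z • (a, w' a) := by
          simp [Prod.ext_iff]
        rw [this]; exact G.smul_mem z iha
    have hspan : ∀ x ∈ Submodule.span ℂ S, ∀ y ∈ Submodule.span ℂ S,
        (inner B (w' x) (w' y) : B) = αv (inner B x y : B) := by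
      intro x hx y hy
      exact key (x, w' x) (hgraph x hx) (y, w' y) (hgraph y hy)
    -- extend by continuity and density
    have hcont1 : Continuous (fun p : T × T => (inner B (w' p.1) (w' p.2) : B)) := by
      have : Continuous (fun p : T × T => ((w' p.1, w' p.2) : T × T)) :=
        (w'.continuous.comp continuous_fst).prodMk (w'.continuous.comp continuous_snd)
      exact rcm_continuous_inner.comp this
    have hcont2 : Continuous (fun p : T × T => αv (inner B p.1 p.2 : B)) :=
      ((NonUnitalStarAlgHom.isometry αv hαvbij.injective).continuous).comp
        rcm_continuous_inner
    have hdense2 : Dense (((Submodule.span ℂ S : Submodule ℂ T) : Set T) ×ˢ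
        ((Submodule.span ℂ S : Submodule ℂ T) : Set T)) := htmul_dense.prod htmul_dense
    have heq : (fun p : T × T => (inner B (w' p.1) (w' p.2) : B))
        = fun p : T × T => αv (inner B p.1 p.2 : B) := by
      apply Continuous.ext_on hdense2 hcont1 hcont2
      rintro ⟨a, b⟩ ⟨ha, hb⟩
      exact hspan a ha b hb
    exact congrFun heq (x, y)
end
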